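/- arXiv:1606.07426 — 2 statements merged into one kernel-verified Lean document; each statement's English description precedes it below -/
import Mathlib

section
/- In the root system of type C_n with sum of positive roots 2ρ = ∑_{j=1}^n 2(n−j+1)ε_j, and central lattice generated by e_1,...,e_{n−1} and F = (1/2)∑_{j=1}^n e_j, for v = ∑_{j=1}^{n−1} k_j e_j + k_n F (k_j ∈ ℤ) one has 2∑_{α∈R⁺}α(v) ≡ k_n·n(n+1) (mod 4). In particular this is ≡ 0 (mod 4) whenever k_n is even, or whenever n ≡ 0 or 3 (mod 4); and ≡ 2 (mod 4) when k_n is odd and n ≡ 1 or 2 (mod 4). -/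
lemma gauss_real (N : ℕ) : (∑ i ∈ Finset.range N, (i : ℝ)) = N * (N - 1) / 2 := by
  induction N with
  | zero => simp
  | succ p ih => rw [Finset.sum_range_succ, ih]; push_cast; ring

lemma knn_modeq (n : ℕ) (kn : ℤ) :
    ((Even kn ∨ n % 4 = 0 ∨ n % 4 = 3) → kn * n * (n + 1) ≡ 0 [ZMOD 4]) ∧
    ((Odd kn ∧ (n % 4 = 1 ∨ n % 4 = 2)) → kn * n * (n + 1) ≡ 2 [ZMOD 4]) := by
  constructor
  · rintro (⟨t, ht⟩ | h | h)
    · obtain ⟨s, hs⟩ := Int.even_mul_succ_self (n : ℤ)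
      refine (Int.modEq_iff_dvd.2 ⟨-(t * s), ?_⟩)
      have : kn * (n : ℤ) * (n + 1) = kn * ((n : ℤ) * (n + 1)) := by ring
      rw [this, ht, hs]; ring
    · obtain ⟨q, hq⟩ : ∃ q : ℕ, n = 4 * q := ⟨n / 4, by omega⟩
      refine Int.modEq_iff_dvd.2 ⟨-(kn * q * (n + 1)), ?_⟩
      subst hq; push_cast; ring
    · obtain ⟨q, hq⟩ : ∃ q : ℕ, n = 4 * q + 3 := ⟨n / 4, by omega⟩
      refine Int.modEq_iff_dvd.2 ⟨-(kn * n * (q + 1)), ?_⟩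
      subst hq; push_cast; ring
  · rintro ⟨⟨a, ha⟩, h | h⟩
    · obtain ⟨q, hq⟩ : ∃ q : ℕ, n = 4 * q + 1 := ⟨n / 4, by omega⟩
      refine Int.modEq_iff_dvd.2 ⟨-(8*a*q*q + 6*a*q + a + 4*q*q + 3*q), ?_⟩
      subst hq ha; push_cast; ring
    · obtain ⟨q, hq⟩ : ∃ q : ℕ, n = 4 * q + 2 := ⟨n / 4, by omega⟩
      refine Int.modEq_iff_dvd.2 ⟨-(8*a*q*q + 10*a*q + 3*a + 4*q*q + 5*q + 1), ?_⟩
      subst hq ha; push_cast; ring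

/-- Type `C_n`: for `v = ∑_{j<n} k_j e_j + k_n F` with `F = (1/2)∑ e_j`,
`2 ∑_{α ∈ R⁺} α(v) = ∑_j 4(n-j+1) v_j` is an integer congruent to `k_n n(n+1)` mod 4;
it is `0` mod 4 when `k_n` is even or `n ≡ 0, 3 (mod 4)`, and `2` mod 4 when `k_n` is
odd and `n ≡ 1, 2 (mod 4)`. -/
theorem stmt_5 (n : ℕ) (hn : 0 < n) (k : Fin (n - 1) → ℤ) (kn : ℤ)
    (v : Fin n → ℝ)
    (hv : ∀ i : Fin n, v i =
      (∑ j : Fin (n - 1), if (j : ℕ) = (i : ℕ) then (k j : ℝ) else 0) + (kn : ℝ) / 2) :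
    ∃ m : ℤ,
      (∑ i : Fin n, 4 * ((n : ℝ) - (i : ℕ)) * v i) = (m : ℝ) ∧
      m ≡ kn * n * (n + 1) [ZMOD 4] ∧
      ((Even kn ∨ n % 4 = 0 ∨ n % 4 = 3) → m ≡ 0 [ZMOD 4]) ∧
      ((Odd kn ∧ (n % 4 = 1 ∨ n % 4 = 2)) → m ≡ 2 [ZMOD 4]) := by
  classical
  set m : ℤ := (∑ j : Fin (n - 1), 4 * ((n : ℤ) - (j : ℕ)) * k j) + kn * n * (n + 1) with hm
  have hm4 : m ≡ kn * n * (n + 1) [ZMOD 4] := by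
    refine Int.modEq_iff_dvd.2 ⟨-(∑ j : Fin (n - 1), ((n : ℤ) - (j : ℕ)) * k j), ?_⟩
    have h4 : (∑ j : Fin (n - 1), 4 * ((n : ℤ) - (j : ℕ)) * k j)
        = 4 * ∑ j : Fin (n - 1), ((n : ℤ) - (j : ℕ)) * k j := by
      rw [Finset.mul_sum]; exact Finset.sum_congr rfl fun j _ => by ring
    rw [hm, h4]; ring
  refine ⟨m, ?_, hm4, fun h => hm4.trans ((knn_modeq n kn).1 h),
    fun h => hm4.trans ((knn_modeq n kn).2 h)⟩
  -- the real computation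
  have step : ∀ i : Fin n, 4 * ((n : ℝ) - (i : ℕ)) * v i
      = (∑ j : Fin (n - 1), if (j : ℕ) = (i : ℕ)
          then 4 * ((n : ℝ) - (j : ℕ)) * (k j : ℝ) else 0)
        + 4 * ((n : ℝ) - (i : ℕ)) * ((kn : ℝ) / 2) := by
    intro i
    rw [hv i, mul_add, Finset.mul_sum]
    congr 1
    refine Finset.sum_congr rfl fun j _ => ?_
    split_ifs with h
    · rw [h]
    · simp
  rw [Finset.sum_congr rfl fun i _ => step i, Finset.sum_add_distrib, Finset.sum_comm]
  have hA : ∀ j : Fin (n - 1),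
      (∑ i : Fin n, if (j : ℕ) = (i : ℕ)
          then 4 * ((n : ℝ) - (j : ℕ)) * (k j : ℝ) else 0)
      = 4 * ((n : ℝ) - (j : ℕ)) * (k j : ℝ) := by
    intro j
    have hj : (j : ℕ) < n := lt_of_lt_of_le j.2 (Nat.sub_le n 1)
    have : ∀ i : Fin n, ((j : ℕ) = (i : ℕ)) ↔ ((⟨j, hj⟩ : Fin n) = i) := by
      intro i; rw [Fin.ext_iff]
    rw [Finset.sum_congr rfl fun i _ => by rw [if_congr (this i) rfl rfl],
      Finset.sum_ite_eq]
    simp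
  rw [Finset.sum_congr rfl fun j _ => hA j]
  have hB : (∑ i : Fin n, 4 * ((n : ℝ) - (i : ℕ)) * ((kn : ℝ) / 2))
      = (kn : ℝ) * n * (n + 1) := by
    rw [← Finset.sum_mul, ← Finset.mul_sum]
    have : (∑ i : Fin n, ((n : ℝ) - (i : ℕ))) = n * (n + 1) / 2 := by
      rw [Finset.sum_sub_distrib, Finset.sum_const, Finset.card_univ, Fintype.card_fin,
        Fin.sum_univ_eq_sum_range, gauss_real]
      have hn1 : (1 : ℝ) ≤ n := by exact_mod_cast hn
      field_simp
      ring
    rw [this]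
    ring
  rw [hB, hm]
  push_cast
  ring
end

section
/- For α, A > 0 with α ≠ A, every positive real of the form √α·ℓ₀·(q² + p²·A/(α−A))^{1/2} with p, q ∈ ℕ coprime and q/p > A/|A−α| is strictly greater than √α·ℓ₀. -/
/-!
Writing `r = A / (α - A)`, it suffices that `q² + p² r > 1`. For `α > A` this is clear, as
`r > 0` and `q ≥ 1`. For `α < A` we have `r = -s` with `s = A / (A - α) > 1`, so `q / p > s > 1`
forces `q ≥ p + 1`, and then `p² s < p q ≤ (q - 1) q ≤ q² - 1`.
-/

open Real

theorem sq_mul_lt_sq_sub_one_of_lt_div {p q : ℕ} {s : ℝ} (hp : 0 < p) (hs : 1 ≤ s)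
    (h : s < q / p) : (p : ℝ) ^ 2 * s < (q : ℝ) ^ 2 - 1 := by
  have hp' : (0 : ℝ) < p := by exact_mod_cast hp
  have hpq : p < q := by exact_mod_cast (one_lt_div hp').1 (hs.trans_lt h)
  have hpq' : (p : ℝ) + 1 ≤ q := by exact_mod_cast hpq
  calc (p : ℝ) ^ 2 * s < (p : ℝ) ^ 2 * (q / p) := by gcongr
    _ = (p : ℝ) * q := by field_simp
    _ ≤ ((q : ℝ) - 1) * q := by gcongr; linarith
    _ ≤ (q : ℝ) ^ 2 - 1 := by nlinarith

theorem one_lt_sq_add_sq_mul_div_sub {α A : ℝ} (hα : 0 < α) (hA : 0 < A) (hne : α ≠ A)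
    {p q : ℕ} (hp : 0 < p) (hq : 0 < q) (hratio : A / |A - α| < q / p) :
    1 < (q : ℝ) ^ 2 + (p : ℝ) ^ 2 * A / (α - A) := by
  rcases hne.lt_or_gt with hlt | hgt
  · have hAα : 0 < A - α := sub_pos.2 hlt
    rw [abs_of_pos hAα] at hratio
    have hs : 1 ≤ A / (A - α) := (one_le_div hAα).2 (by linarith)
    have hneg : (p : ℝ) ^ 2 * A / (α - A) = -((p : ℝ) ^ 2 * (A / (A - α))) := by
      rw [← neg_sub A α, div_neg, mul_div_assoc]
    linarith [sq_mul_lt_sq_sub_one_of_lt_div hp hs hratio]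
  · have hq1 : (1 : ℝ) ≤ (q : ℝ) ^ 2 := one_le_pow₀ (by exact_mod_cast hq)
    have hαA : 0 < α - A := sub_pos.2 hgt
    have : 0 < (p : ℝ) ^ 2 * A / (α - A) := by positivity
    linarith

theorem stmt_11_general (α A : ℝ) (hα : 0 < α) (hA : 0 < A) (hne : α ≠ A)
    (p q : ℕ) (hp : 0 < p) (hq : 0 < q)
    (hratio : (q : ℝ) / (p : ℝ) > A / |A - α|) :
    Real.sqrt α * (2 * Real.sqrt 2 * Real.pi) *
        Real.sqrt ((q : ℝ) ^ 2 + (p : ℝ) ^ 2 * A / (α - A))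
      > Real.sqrt α * (2 * Real.sqrt 2 * Real.pi) := by
  have hℓ : 0 < √α * (2 * √2 * π) := by positivity
  have hr := one_lt_sq_add_sq_mul_div_sub hα hA hne hp hq hratio
  exact lt_mul_of_one_lt_right hℓ ((Real.lt_sqrt zero_le_one).2 (by simpa using hr))

/-- Type III primitive lengths `√α ℓ₀ (q² + p² A/(α-A))^{1/2}` (with `p, q` coprime
positive integers and `q/p > A/|A-α|`) are strictly greater than `√α ℓ₀`,
where `ℓ₀ = 2√2 π`. -/
theorem stmt_11 (α A : ℝ) (hα : 0 < α) (hA : 0 < A) (hne : α ≠ A)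
    (p q : ℕ) (hp : 0 < p) (hq : 0 < q) (hcop : Nat.Coprime p q)
    (hratio : (q : ℝ) / (p : ℝ) > A / |A - α|) :
    Real.sqrt α * (2 * Real.sqrt 2 * Real.pi) *
        Real.sqrt ((q : ℝ) ^ 2 + (p : ℝ) ^ 2 * A / (α - A))
      > Real.sqrt α * (2 * Real.sqrt 2 * Real.pi) :=
  stmt_11_general α A hα hA hne p q hp hq hratio
end
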